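/- Fix θ ∈ [0,k], r = θ + 1/2, and a sequence (x_1,y_1),...,(x_T,y_T) ∈ [0,1]^d × {±1} with T ≥ 4k ln(d)/r. Run the unnormalized EG algorithm with η = sqrt(k ln(d)/(rT)), λ = k/d, and z_t a subgradient of the Winnow loss ℓ(x_t,y_t,·) at w_t. Then for any u ∈ ℝ_+^d with ‖u‖₁ ≤ k: ∑_{t=1}^T ℓ(x_t,y_t,w_t) − ∑_{t=1}^T ℓ(x_t,y_t,u*) ≤ sqrt(16·r·k·ln(d)·T) + 4k·ln(d), where u* is a minimizer of the cumulative loss over the ℓ₁-ball. -/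

import Mathlib

/-!
Unnormalized EG is mirror descent for the unnormalized relative entropy
`D(v, w) = ∑ᵢ vᵢ (log vᵢ - log wᵢ) - vᵢ + wᵢ`. As long as `|η zₜᵢ| ≤ 1/2`, the bound
`eᵃ ≤ 1 + a + 2a²/3` gives, in every round,
`η ⟨zₜ, wₜ - v⟩ ≤ D(v, wₜ) - D(v, wₜ₊₁) + (2/3) η² ∑ᵢ wₜᵢ zₜᵢ²`.
For the Winnow loss every subgradient satisfies `-y zₜᵢ ∈ [0, xₜᵢ]`, whence `|zₜᵢ| ≤ 1` and the
local-norm bound `∑ᵢ wₜᵢ zₜᵢ² ≤ ℓₜ(wₜ) + r`. Summing over rounds, the comparator `0` (cumulative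
loss at most `rT`, `D(0, w₁) = k`) bounds the learner's own cumulative loss by `2rT + 3k/(2η)`;
the comparator `u` (`D(u, w₁) ≤ 2k ln d`) then gives the regret bound for the tuned `η`.
-/

open Finset Real

theorem Real.exp_le_one_add_add_two_thirds_sq {a : ℝ} (h : |a| ≤ 1 / 2) :
    exp a ≤ 1 + a + 2 / 3 * a ^ 2 := by
  -- third-order Taylor bound: the cubic remainder is at most `(2/9)|a|³ ≤ a²/9`
  have hb := Real.exp_bound (h.trans (by norm_num)) (n := 3) (by norm_num)
  simp only [Finset.sum_range_succ, Finset.sum_range_zero, Nat.factorial] at hb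
  norm_num at hb
  have hcube : |a| ^ 3 = |a| * a ^ 2 := by rw [pow_succ, sq_abs]; ring
  nlinarith [(abs_le.mp hb).2, abs_nonneg a, sq_nonneg a]

section UnnormalizedKL

variable {ι : Type*} [Fintype ι]

noncomputable def unnormalizedKL (v w : ι → ℝ) : ℝ :=
  ∑ i, (v i * (log (v i) - log (w i)) - v i + w i)

theorem unnormalizedKL_nonneg {v w : ι → ℝ} (hv : ∀ i, 0 ≤ v i) (hw : ∀ i, 0 < w i) :
    0 ≤ unnormalizedKL v w := by
  refine Finset.sum_nonneg fun i _ => ?_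
  rcases (hv i).eq_or_lt with h | h
  · simp [← h, (hw i).le]
  · have hlog := Real.log_le_sub_one_of_pos (div_pos (hw i) h)
    rw [Real.log_div (hw i).ne' h.ne', le_sub_iff_add_le, le_div_iff₀ h] at hlog
    linarith

theorem unnormalizedKL_zero_left (w : ι → ℝ) : unnormalizedKL 0 w = ∑ i, w i := by
  simp [unnormalizedKL]

theorem unnormalizedKL_uniform_le [Nonempty ι] {u : ι → ℝ} {k : ℝ} (hk : 0 < k) (hu : ∀ i, 0 ≤ u i)
    (hu1 : ∑ i, u i ≤ k) :
    unnormalizedKL u (fun _ => k / Fintype.card ι) ≤ max (k * log (Fintype.card ι)) k := by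
  set n : ℝ := (Fintype.card ι : ℝ)
  have hn : 0 < n := by simpa [n] using Fintype.card_pos
  have hterm : ∀ i, u i * (log (u i) - log (k / n)) - u i + k / n ≤ u i * log n - u i + k / n := by
    intro i
    have hui : u i ≤ k := (Finset.single_le_sum (fun j _ => hu j) (Finset.mem_univ i)).trans hu1
    rw [Real.log_div hk.ne' hn.ne']
    rcases (hu i).eq_or_lt with h | h
    · simp [← h]
    · nlinarith [Real.log_le_log h hui]
  calc unnormalizedKL u (fun _ => k / n) ≤ ∑ i, (u i * log n - u i + k / n) :=
        Finset.sum_le_sum fun i _ => hterm i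
    _ = (log n - 1) * ∑ i, u i + k := by
        rw [Finset.sum_add_distrib, Finset.sum_sub_distrib, ← Finset.sum_mul, Finset.sum_const,
          Finset.card_univ, nsmul_eq_mul, mul_div_cancel₀ k hn.ne']
        ring
    _ ≤ max (k * log n) k := by
        rcases le_total 1 (log n) with hL | hL
        · nlinarith [le_max_left (k * log n) k]
        · nlinarith [le_max_right (k * log n) k, Finset.sum_nonneg fun i (_ : i ∈ univ) => hu i]

theorem unnormalizedKL_eg_step {w z : ι → ℝ} (v : ι → ℝ) {η : ℝ} (hw : ∀ i, 0 < w i)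
    (hz : ∀ i, |η * z i| ≤ 1 / 2) :
    η * ∑ i, z i * (w i - v i) ≤
      unnormalizedKL v w - unnormalizedKL v (fun i => w i * exp (-η * z i)) +
        2 / 3 * η ^ 2 * ∑ i, w i * z i ^ 2 := by
  have hcoord : ∀ i, η * (z i * (w i - v i)) ≤
      (v i * (log (v i) - log (w i)) - v i + w i) -
        (v i * (log (v i) - log (w i * exp (-η * z i))) - v i + w i * exp (-η * z i)) +
        2 / 3 * η ^ 2 * (w i * z i ^ 2) := by
    intro i
    have hexp := Real.exp_le_one_add_add_two_thirds_sq (a := -η * z i)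
      (by rw [neg_mul, abs_neg]; exact hz i)
    rw [Real.log_mul (hw i).ne' (Real.exp_ne_zero _), Real.log_exp]
    nlinarith [mul_le_mul_of_nonneg_left hexp (hw i).le]
  rw [unnormalizedKL, unnormalizedKL, ← Finset.sum_sub_distrib, Finset.mul_sum, Finset.mul_sum,
    ← Finset.sum_add_distrib]
  exact Finset.sum_le_sum fun i _ => hcoord i

end UnnormalizedKL

section ExponentiatedGradient

variable {ι : Type*} {w z : ℕ → ι → ℝ} {η : ℝ}

theorem eg_weight_pos (hw1 : ∀ i, 0 < w 1 i) (hrec : ∀ t i, w (t + 1) i = w t i * exp (-η * z t i))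
    {t : ℕ} (ht : 1 ≤ t) (i : ι) : 0 < w t i := by
  induction t, ht using Nat.le_induction generalizing i with
  | base => exact hw1 i
  | succ t _ ih => rw [hrec]; exact mul_pos (ih i) (Real.exp_pos _)

variable [Fintype ι]

theorem eg_regret_le (hw1 : ∀ i, 0 < w 1 i)
    (hrec : ∀ t i, w (t + 1) i = w t i * exp (-η * z t i)) {T : ℕ}
    (hz : ∀ t ∈ Icc 1 T, ∀ i, |η * z t i| ≤ 1 / 2) {v : ι → ℝ} (hv : ∀ i, 0 ≤ v i) :
    η * ∑ t ∈ Icc 1 T, ∑ i, z t i * (w t i - v i) ≤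
      unnormalizedKL v (w 1) + 2 / 3 * η ^ 2 * ∑ t ∈ Icc 1 T, ∑ i, w t i * z t i ^ 2 := by
  suffices h : η * ∑ t ∈ Icc 1 T, ∑ i, z t i * (w t i - v i) + unnormalizedKL v (w (T + 1)) ≤
      unnormalizedKL v (w 1) + 2 / 3 * η ^ 2 * ∑ t ∈ Icc 1 T, ∑ i, w t i * z t i ^ 2 by
    linarith [unnormalizedKL_nonneg hv (eg_weight_pos hw1 hrec (Nat.le_add_left 1 T))]
  induction T with
  | zero => simp
  | succ T ih =>
    have hstep := unnormalizedKL_eg_step v (eg_weight_pos hw1 hrec (Nat.le_add_left 1 T))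
      (hz (T + 1) (Finset.right_mem_Icc.mpr (Nat.le_add_left 1 T)))
    have hw : w (T + 1 + 1) = fun i => w (T + 1) i * exp (-η * z (T + 1) i) := funext (hrec _)
    rw [← hw] at hstep
    rw [Finset.sum_Icc_succ_top (Nat.le_add_left 1 T),
      Finset.sum_Icc_succ_top (Nat.le_add_left 1 T)]
    have := ih fun t ht => hz t (Finset.Icc_subset_Icc_right (Nat.le_succ T) ht)
    linarith

end ExponentiatedGradient

section Winnow

variable {ι : Type*} [Fintype ι]

def IsSubgradientAt (f : (ι → ℝ) → ℝ) (w z : ι → ℝ) : Prop :=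
  ∀ v, f w + ∑ i, z i * (v i - w i) ≤ f v

noncomputable def winnowLoss (θ : ℝ) (x : ι → ℝ) (y : ℝ) (v : ι → ℝ) : ℝ :=
  max 0 (1 / 2 - y * ((∑ i, v i * x i) - θ))

variable {θ y : ℝ} {x w z : ι → ℝ}

theorem winnowLoss_nonneg (θ : ℝ) (x : ι → ℝ) (y : ℝ) (v : ι → ℝ) : 0 ≤ winnowLoss θ x y v :=
  le_max_left _ _

theorem winnowLoss_zero_le (hθ : 0 ≤ θ) (hy : y = 1 ∨ y = -1) :
    winnowLoss θ x y 0 ≤ θ + 1 / 2 := by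
  refine max_le (by linarith) ?_
  rcases hy with rfl | rfl <;> simp <;> linarith

theorem IsSubgradientAt.winnowLoss_mem_Icc
    (hz : IsSubgradientAt (winnowLoss θ x y) w z) (hy : y = 1 ∨ y = -1) (i : ι)
    (hx : 0 ≤ x i) : -(y * z i) ∈ Set.Icc 0 (x i) := by
  classical
  set a := 1 / 2 - y * ((∑ j, w j * x j) - θ)
  have hmove : ∀ s, max 0 a + z i * s ≤ max 0 (a - y * (s * x i)) := by
    intro s
    convert hz (w + Pi.single i s) using 1
    · simp [Pi.single_apply, a, winnowLoss]
    · simp only [winnowLoss, Pi.add_apply, add_mul, Finset.sum_add_distrib, Pi.single_apply,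
        ite_mul, zero_mul, Finset.sum_ite_eq', Finset.mem_univ, if_true, a]
      ring_nf
  have hyy : y * y = 1 := by rcases hy with rfl | rfl <;> norm_num
  have hdown := hmove y
  rw [show y * (y * x i) = x i by linear_combination x i * hyy] at hdown
  have hup := hmove (-y)
  rw [show y * (-y * x i) = -x i by linear_combination -x i * hyy, sub_neg_eq_add] at hup
  constructor
  · have := max_le_max_left 0 (by linarith : a - x i ≤ a)
    linarith
  · have := max_le (by positivity : (0 : ℝ) ≤ max 0 a + x i)
      (by linarith [le_max_right 0 a] : a + x i ≤ max 0 a + x i)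
    linarith

theorem IsSubgradientAt.winnowLoss_sq_le (hz : IsSubgradientAt (winnowLoss θ x y) w z)
    (hy : y = 1 ∨ y = -1) (i : ι) (hx : x i ∈ Set.Icc 0 1) : z i ^ 2 ≤ -(y * z i) := by
  obtain ⟨h0, h1⟩ := hz.winnowLoss_mem_Icc hy i hx.1
  have hyy : y ^ 2 = 1 := by rcases hy with rfl | rfl <;> norm_num
  nlinarith [mul_le_mul_of_nonneg_left (h1.trans hx.2) h0]

theorem IsSubgradientAt.winnowLoss_abs_le_one (hz : IsSubgradientAt (winnowLoss θ x y) w z)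
    (hy : y = 1 ∨ y = -1) (i : ι) (hx : x i ∈ Set.Icc 0 1) : |z i| ≤ 1 := by
  rw [← sq_le_one_iff_abs_le_one]
  linarith [hz.winnowLoss_sq_le hy i hx, (hz.winnowLoss_mem_Icc hy i hx.1).2, hx.2]

theorem IsSubgradientAt.winnowLoss_sum_mul_sq_le (hz : IsSubgradientAt (winnowLoss θ x y) w z)
    (hθ : 0 ≤ θ) (hy : y = 1 ∨ y = -1) (hx : ∀ i, x i ∈ Set.Icc 0 1) (hw : ∀ i, 0 ≤ w i) :
    ∑ i, w i * z i ^ 2 ≤ winnowLoss θ x y w + (θ + 1 / 2) := by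
  have hsq : ∑ i, w i * z i ^ 2 ≤ -(y * ∑ i, w i * z i) := by
    rw [Finset.mul_sum, ← Finset.sum_neg_distrib]
    exact Finset.sum_le_sum fun i _ => by
      nlinarith [mul_le_mul_of_nonneg_left (hz.winnowLoss_sq_le hy i (hx i)) (hw i)]
  rcases hy with rfl | rfl
  · have h0 := hz 0
    have := winnowLoss_zero_le hθ (Or.inl rfl) (x := x)
    simp only [Pi.zero_apply, zero_sub, mul_neg, Finset.sum_neg_distrib] at h0
    simp only [mul_comm (z _)] at h0
    rw [one_mul] at hsq
    linarith [winnowLoss_nonneg θ x 1 w]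
  · -- for `y = -1` each `zᵢ ≤ xᵢ`, and `⟨w, x⟩ - θ` is bounded by the loss itself
    have hzx : ∑ i, w i * z i ≤ ∑ i, w i * x i := Finset.sum_le_sum fun i _ =>
      mul_le_mul_of_nonneg_left (by linarith [(hz.winnowLoss_mem_Icc (Or.inr rfl) i (hx i).1).2])
        (hw i)
    have := le_max_right 0 (1 / 2 - (-1) * ((∑ i, w i * x i) - θ))
    rw [winnowLoss]
    linarith

end Winnow

theorem winnow_eg_regret_le {ι : Type*} [Fintype ι] {x w z : ℕ → ι → ℝ} {y : ℕ → ℝ}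
    {θ η : ℝ} {T : ℕ} (hθ : 0 ≤ θ) (hx : ∀ t i, x t i ∈ Set.Icc 0 1)
    (hy : ∀ t, y t = 1 ∨ y t = -1) (hw1 : ∀ i, 0 < w 1 i)
    (hrec : ∀ t i, w (t + 1) i = w t i * exp (-η * z t i))
    (hsub : ∀ t ∈ Icc 1 T, IsSubgradientAt (winnowLoss θ (x t) (y t)) (w t) (z t))
    (hη0 : 0 ≤ η) (hη : η ≤ 1 / 2) {v : ι → ℝ} (hv : ∀ i, 0 ≤ v i) :
    η * (∑ t ∈ Icc 1 T, winnowLoss θ (x t) (y t) (w t) -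
        ∑ t ∈ Icc 1 T, winnowLoss θ (x t) (y t) v) ≤
      unnormalizedKL v (w 1) +
        2 / 3 * η ^ 2 * (∑ t ∈ Icc 1 T, winnowLoss θ (x t) (y t) (w t) + (θ + 1 / 2) * T) := by
  have hpos : ∀ t ∈ Icc 1 T, ∀ i, 0 < w t i := fun t ht => eg_weight_pos hw1 hrec (mem_Icc.mp ht).1
  have hlin : ∑ t ∈ Icc 1 T, winnowLoss θ (x t) (y t) (w t) -
      ∑ t ∈ Icc 1 T, winnowLoss θ (x t) (y t) v ≤ ∑ t ∈ Icc 1 T, ∑ i, z t i * (w t i - v i) := by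
    rw [← Finset.sum_sub_distrib]
    refine Finset.sum_le_sum fun t ht => ?_
    have h := hsub t ht v
    have hflip : ∑ i, z t i * (v i - w t i) = -∑ i, z t i * (w t i - v i) := by
      rw [← Finset.sum_neg_distrib]; congr 1; ext i; ring
    linarith
  have hz : ∀ t ∈ Icc 1 T, ∀ i, |η * z t i| ≤ 1 / 2 := fun t ht i => by
    rw [abs_mul, abs_of_nonneg hη0]
    nlinarith [(hsub t ht).winnowLoss_abs_le_one (hy t) i (hx t i), abs_nonneg (z t i)]
  have hloc : ∑ t ∈ Icc 1 T, ∑ i, w t i * z t i ^ 2 ≤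
      ∑ t ∈ Icc 1 T, winnowLoss θ (x t) (y t) (w t) + (θ + 1 / 2) * T := by
    have h := Finset.sum_le_sum fun t ht => (hsub t ht).winnowLoss_sum_mul_sq_le hθ (hy t) (hx t)
      fun i => (hpos t ht i).le
    rwa [Finset.sum_add_distrib, Finset.sum_const, Nat.card_Icc, Nat.add_sub_cancel, nsmul_eq_mul,
      mul_comm] at h
  calc _ ≤ η * ∑ t ∈ Icc 1 T, ∑ i, z t i * (w t i - v i) := mul_le_mul_of_nonneg_left hlin hη0
    _ ≤ unnormalizedKL v (w 1) + 2 / 3 * η ^ 2 * ∑ t ∈ Icc 1 T, ∑ i, w t i * z t i ^ 2 :=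
      eg_regret_le hw1 hrec hz hv
    _ ≤ _ := by gcongr

theorem eg_learning_rate_spec {k L r T η : ℝ} (hk : 0 < k) (hL : 0 < L) (hr : 0 < r)
    (hT : 4 * k * L / r ≤ T) (hη : η = √(k * L / (r * T))) :
    0 < η ∧ η ≤ 1 / 2 ∧ η ^ 2 * (r * T) = k * L := by
  have hT0 : 0 < T := lt_of_lt_of_le (by positivity) hT
  have hηsq : η ^ 2 * (r * T) = k * L := by
    rw [hη, Real.sq_sqrt (by positivity), div_mul_cancel₀ _ (by positivity)]
  have hη0 : 0 < η := by rw [hη]; positivity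
  rw [div_le_iff₀ hr] at hT
  have h : η ^ 2 * (r * T) ≤ (1 / 2) ^ 2 * (r * T) := by linarith
  exact ⟨hη0, by nlinarith [le_of_mul_le_mul_right h (by positivity)], hηsq⟩

theorem regret_le_of_eg_bounds {η A B₀ B R k D : ℝ} (hη0 : 0 < η) (hη : η ≤ 1 / 2)
    (hA : 0 ≤ A) (hR : 0 ≤ R) (hB₀ : B₀ ≤ R) (hD : D ≤ 2 * η ^ 2 * R)
    (h₀ : η * (A - B₀) ≤ k + 2 / 3 * η ^ 2 * (A + R))
    (h : η * (A - B) ≤ D + 2 / 3 * η ^ 2 * (A + R)) :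
    A - B ≤ 4 * η * R + k := by
  have hA' : η * A ≤ 2 * η * R + 3 / 2 * k := by
    nlinarith [mul_nonneg (by linarith : 0 ≤ 1 / 2 - η) (mul_nonneg hη0.le hA),
      mul_nonneg (by linarith : 0 ≤ 1 / 2 - η) (mul_nonneg hη0.le hR)]
  refine le_of_mul_le_mul_left ?_ hη0
  nlinarith

/-- Regret bound for unnormalized EG on the Winnow loss
`ℓ(x,y,w) = [1/2 − y(⟨w,x⟩ − θ)]₊` with `θ ∈ [0,k]`, `r = θ + 1/2`: if `T ≥ 4k ln(d)/r`,
`η = sqrt(k ln d/(rT))`, `λ = k/d`, and each `z_t` is a subgradient of the loss at `w_t`,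
then for every comparator `u ≥ 0` with `‖u‖₁ ≤ k` (in particular the cumulative-loss
minimizer `u*`), the regret is at most `sqrt(16·r·k·ln(d)·T) + 4k ln d`. -/
theorem stmt19 (d T : ℕ) (hd : 1 < d) (k θ : ℝ) (hk : 0 < k)
    (hθ : θ ∈ Set.Icc (0 : ℝ) k) (r : ℝ) (hr : r = θ + 1 / 2)
    (x : ℕ → Fin d → ℝ) (hx : ∀ t i, x t i ∈ Set.Icc (0 : ℝ) 1)
    (y : ℕ → ℝ) (hy : ∀ t, y t = 1 ∨ y t = -1)
    (hT : 4 * k * Real.log d / r ≤ T)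
    (η : ℝ) (hη : η = Real.sqrt (k * Real.log d / (r * T)))
    (w z : ℕ → Fin d → ℝ)
    (hinit : ∀ i, w 1 i = k / d)
    (hrec : ∀ t i, w (t + 1) i = w t i * Real.exp (-η * z t i))
    (hsub : ∀ t ∈ Finset.Icc 1 T, ∀ v : Fin d → ℝ,
      max 0 (1 / 2 - y t * ((∑ i, w t i * x t i) - θ)) + ∑ i, z t i * (v i - w t i) ≤
        max 0 (1 / 2 - y t * ((∑ i, v i * x t i) - θ)))
    (u : Fin d → ℝ) (hu : ∀ i, 0 ≤ u i) (hu1 : (∑ i, |u i|) ≤ k) :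
    ∑ t ∈ Finset.Icc 1 T, max 0 (1 / 2 - y t * ((∑ i, w t i * x t i) - θ)) -
      ∑ t ∈ Finset.Icc 1 T, max 0 (1 / 2 - y t * ((∑ i, u i * x t i) - θ)) ≤
      Real.sqrt (16 * r * k * Real.log d * T) + 4 * k * Real.log d := by
  have hL : 1 / 2 < log d := by
    have := Real.log_two_gt_d9
    linarith [Real.log_le_log two_pos (by exact_mod_cast hd : (2 : ℝ) ≤ d)]
  have hr0 : 0 < r := by linarith [hθ.1]
  obtain ⟨hη0, hη1, hηsq⟩ := eg_learning_rate_spec hk (by linarith) hr0 hT hη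
  have hw1 : w 1 = fun _ => k / Fintype.card (Fin d) := by funext i; simp [hinit]
  have hregret := fun {v} hv => hr ▸ winnow_eg_regret_le hθ.1 hx hy
    (fun i => by rw [hinit]; positivity) hrec hsub hη0.le hη1 (v := v) hv
  have hKL0 : unnormalizedKL 0 (w 1) = k := by
    rw [unnormalizedKL_zero_left, hw1]
    simp [mul_div_cancel₀ k (by positivity : (d : ℝ) ≠ 0)]
  have hKLu : unnormalizedKL u (w 1) ≤ 2 * η ^ 2 * (r * T) := by
    have : Nonempty (Fin d) := ⟨⟨0, by omega⟩⟩
    rw [hw1, mul_assoc, hηsq]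
    refine (unnormalizedKL_uniform_le hk hu (by simpa [abs_of_nonneg, hu] using hu1)).trans ?_
    simp only [Fintype.card_fin]
    exact max_le (by nlinarith) (by nlinarith)
  have hB₀ : ∑ t ∈ Icc 1 T, winnowLoss θ (x t) (y t) 0 ≤ r * T :=
    calc _ ≤ ∑ t ∈ Icc 1 T, r := Finset.sum_le_sum fun t _ => hr ▸ winnowLoss_zero_le hθ.1 (hy t)
      _ = r * T := by simp [mul_comm]
  have hregret_u := regret_le_of_eg_bounds hη0 hη1 (sum_nonneg fun t _ => winnowLoss_nonneg ..)
    (by positivity) hB₀ hKLu (hKL0 ▸ hregret fun _ => le_rfl) (hregret hu)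
  have hsqrt : √(16 * r * k * log d * T) = 4 * η * (r * T) := by
    rw [show 16 * r * k * log d * T = (4 * η * (r * T)) ^ 2 by
      linear_combination (-16 * r * T) * hηsq]
    exact Real.sqrt_sq (by positivity)
  rw [hsqrt]
  exact hregret_u.trans (by nlinarith)
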